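/- The optimal success probability for minimum-error discrimination of states ρ₁,...,ρᵣ with priors q₁,...,qᵣ, defined as the supremum over all POVMs (M₁,...,Mᵣ) of ∑ᵢ qᵢ tr(ρᵢ Mᵢ), is at least max_j { q_j + (1/(r−1)) ∑ᵢ ‖(qᵢρᵢ − q_jρ_j)⁺‖₁ } for r ≥ 2. -/

import Mathlib

open scoped ComplexOrder

/-- The operator absolute value `√(AᴴA)` of a matrix. -/
noncomputable def matAbs {n : ℕ} (A : Matrix (Fin n) (Fin n) ℂ) : Matrix (Fin n) (Fin n) ℂ :=
  (Matrix.posSemidef_conjTranspose_mul_self A).1.eigenvectorUnitary.1 *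
    Matrix.diagonal ((↑) ∘ (√·) ∘ (Matrix.posSemidef_conjTranspose_mul_self A).1.eigenvalues) *
    (star (Matrix.posSemidef_conjTranspose_mul_self A).1.eigenvectorUnitary : Matrix (Fin n) (Fin n) ℂ)

/-- The trace norm `‖A‖₁ = tr √(AᴴA)`. -/
noncomputable def traceNorm {n : ℕ} (A : Matrix (Fin n) (Fin n) ℂ) : ℝ :=
  ((matAbs A).trace).re

/-- The positive part `A⁺ = (|A| + A)/2` of a self-adjoint matrix `A`, so that
`A = A⁺ - A⁻` with `A⁺, A⁻ ≥ 0`. -/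
noncomputable def matPosPart {n : ℕ} (A : Matrix (Fin n) (Fin n) ℂ) : Matrix (Fin n) (Fin n) ℂ :=
  (2 : ℂ)⁻¹ • (matAbs A + A)

/-- A density operator: positive semidefinite with unit trace. -/
def IsDensity {n : ℕ} (ρ : Matrix (Fin n) (Fin n) ℂ) : Prop :=
  ρ.PosSemidef ∧ ρ.trace = 1

/-- A POVM with `r` outcomes: positive semidefinite effects summing to the identity. -/
def IsPOVM {n r : ℕ} (M : Fin r → Matrix (Fin n) (Fin n) ℂ) : Prop :=
  (∀ i, (M i).PosSemidef) ∧ ∑ i, M i = 1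

/-- Success probability `∑ i, q i * tr (ρ i * M i)` of a measurement. -/
noncomputable def successProb {n r : ℕ} (q : Fin r → ℝ)
    (ρ M : Fin r → Matrix (Fin n) (Fin n) ℂ) : ℝ :=
  ∑ i, q i * ((ρ i * M i).trace).re

/-- Optimal success probability under minimum-error discrimination. -/
noncomputable def optSuccess {n r : ℕ} (q : Fin r → ℝ)
    (ρ : Fin r → Matrix (Fin n) (Fin n) ℂ) : ℝ :=
  sSup {p | ∃ M, IsPOVM M ∧ p = successProb q ρ M}

/-!
Fix `j` and let `Pᵢ` be the spectral projection of `Xᵢ = qᵢρᵢ - q_jρ_j` onto its positive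
eigenspaces, so that `tr (Xᵢ Pᵢ) = tr Xᵢ⁺ = ‖Xᵢ⁺‖₁`. Measuring `Pᵢ / (r - 1)` for `i ≠ j` and the
remainder `1 - ∑_{i ≠ j} Pᵢ / (r - 1)` for `j` is a POVM because `0 ≤ Pᵢ ≤ 1`, and its success
probability is `q_j + (1/(r-1)) ∑ᵢ tr (Xᵢ Pᵢ)`, the `j`-th term of the maximum.
-/

open scoped MatrixOrder

namespace Matrix

variable {m 𝕜 : Type*} [Fintype m] [RCLike 𝕜]

lemma PosSemidef.trace_mul_nonneg {A B : Matrix m m 𝕜} (hA : A.PosSemidef) (hB : B.PosSemidef) :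
    0 ≤ (A * B).trace := by
  classical
  obtain ⟨C, rfl⟩ := CStarAlgebra.nonneg_iff_eq_star_mul_self.mp hB.nonneg
  rw [← Matrix.mul_assoc, trace_mul_comm, ← Matrix.mul_assoc]
  exact (hA.mul_mul_conjTranspose_same C).trace_nonneg

lemma PosSemidef.trace_mul_mono {A B C : Matrix m m 𝕜} (hA : A.PosSemidef) (hBC : B ≤ C) :
    (A * B).trace ≤ (A * C).trace := by
  simpa [Matrix.mul_sub, trace_sub] using hA.trace_mul_nonneg (le_iff.mp hBC)

variable [DecidableEq m]

/-- `cfc` only needs continuity on the spectrum, which is finite here, so the indicator of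
`(0, ∞)` is admissible. -/
noncomputable def posProj (A : Matrix m m 𝕜) : Matrix m m 𝕜 :=
  cfc (fun x : ℝ => if 0 < x then (1 : ℝ) else 0) A

lemma posProj_nonneg (A : Matrix m m 𝕜) : 0 ≤ posProj A :=
  cfc_nonneg fun x _ => by split_ifs <;> norm_num

lemma posProj_le_one (A : Matrix m m 𝕜) : posProj A ≤ 1 :=
  cfc_le_one _ A fun x _ => by split_ifs <;> norm_num

lemma mul_posProj {A : Matrix m m 𝕜} (hA : A.IsHermitian) : A * posProj A = A⁺ := by
  have hcont := fun f : ℝ → ℝ => (finite_real_spectrum (A := A)).continuousOn f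
  conv_lhs => arg 1; rw [← cfc_id' ℝ A]
  rw [posProj, ← cfc_mul _ _ _ (hcont _) (hcont _), CFC.posPart_def, cfcₙ_eq_cfc]
  refine cfc_congr fun x _ => ?_
  split_ifs with hx
  · simp [hx.le]
  · simp [not_lt.mp hx]

end Matrix

open Matrix

section TraceNorm

variable {n : ℕ}

lemma matAbs_eq_abs (A : Matrix (Fin n) (Fin n) ℂ) : matAbs A = CFC.abs A := by
  have hAA := posSemidef_conjTranspose_mul_self A
  rw [CFC.abs, star_eq_conjTranspose, CFC.sqrt_eq_real_sqrt _ hAA.nonneg, cfcₙ_eq_cfc, hAA.1.cfc_eq]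
  rfl

lemma matPosPart_eq_posPart {A : Matrix (Fin n) (Fin n) ℂ} (hA : A.IsHermitian) :
    matPosPart A = A⁺ := by
  rw [matPosPart, matAbs_eq_abs, CFC.abs_add_self A hA, two_nsmul, ← two_smul ℂ, smul_smul]
  norm_num

lemma traceNorm_of_nonneg {A : Matrix (Fin n) (Fin n) ℂ} (hA : 0 ≤ A) :
    traceNorm A = A.trace.re := by
  rw [traceNorm, matAbs_eq_abs, CFC.abs_of_nonneg A]

end TraceNorm

section Discrimination

variable {n r : ℕ} {ρ M : Fin r → Matrix (Fin n) (Fin n) ℂ} {q : Fin r → ℝ}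

lemma IsPOVM.le_one (hM : IsPOVM M) (i : Fin r) : M i ≤ 1 := by
  rw [← hM.2, ← Finset.add_sum_erase _ _ (Finset.mem_univ i)]
  exact le_add_of_nonneg_right (Finset.sum_nonneg fun k _ => (hM.1 k).nonneg)

lemma successProb_le_one (hρ : ∀ i, IsDensity (ρ i)) (hq : ∀ i, 0 ≤ q i) (hq1 : ∑ i, q i = 1)
    (hM : IsPOVM M) : successProb q ρ M ≤ 1 := by
  calc successProb q ρ M ≤ ∑ i, q i * 1 := by
        refine Finset.sum_le_sum fun i _ => mul_le_mul_of_nonneg_left ?_ (hq i)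
        have h := (Complex.le_def.mp ((hρ i).1.trace_mul_mono (hM.le_one i))).1
        rwa [Matrix.mul_one, (hρ i).2, Complex.one_re] at h
    _ = 1 := by simpa using hq1

lemma successProb_le_optSuccess (hρ : ∀ i, IsDensity (ρ i)) (hq : ∀ i, 0 ≤ q i)
    (hq1 : ∑ i, q i = 1) (hM : IsPOVM M) : successProb q ρ M ≤ optSuccess q ρ :=
  le_csSup ⟨1, by rintro _ ⟨M', hM', rfl⟩; exact successProb_le_one hρ hq hq1 hM'⟩ ⟨M, hM, rfl⟩

noncomputable def pivotPOVM (P : Fin r → Matrix (Fin n) (Fin n) ℂ) (j : Fin r) :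
    Fin r → Matrix (Fin n) (Fin n) ℂ :=
  Function.update (fun i => (1 / ((r : ℝ) - 1)) • P i) j
    (1 - ∑ k ∈ Finset.univ.erase j, (1 / ((r : ℝ) - 1)) • P k)

variable {P : Fin r → Matrix (Fin n) (Fin n) ℂ} {j : Fin r}

lemma isPOVM_pivotPOVM (hP₀ : ∀ i, 0 ≤ P i) (hP₁ : ∀ i, P i ≤ 1) : IsPOVM (pivotPOVM P j) := by
  set c : ℝ := 1 / ((r : ℝ) - 1)
  have hc : 0 ≤ c := by
    have : (1 : ℝ) ≤ r := by exact_mod_cast j.pos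
    exact one_div_nonneg.mpr (by linarith)
  refine ⟨fun i => ?_, ?_⟩
  · rcases eq_or_ne i j with rfl | hij
    · rw [pivotPOVM, Function.update_self, ← nonneg_iff_posSemidef, sub_nonneg]
      calc ∑ k ∈ Finset.univ.erase i, c • P k
          ≤ ∑ k ∈ Finset.univ.erase i, c • (1 : Matrix (Fin n) (Fin n) ℂ) :=
            Finset.sum_le_sum fun k _ => smul_le_smul_of_nonneg_left (hP₁ k) hc
        _ = (((r - 1 : ℕ) : ℝ) * c) • 1 := by
            rw [Finset.sum_const, Finset.card_erase_of_mem (Finset.mem_univ i), Finset.card_univ,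
              Fintype.card_fin, ← Nat.cast_smul_eq_nsmul ℝ, smul_smul]
        _ ≤ 1 := by
            have hr : ((r - 1 : ℕ) : ℝ) * c ≤ 1 := by
              rw [Nat.cast_pred i.pos, mul_one_div]
              exact div_self_le_one _
            have h := smul_nonneg (sub_nonneg.mpr hr) (zero_le_one' (Matrix (Fin n) (Fin n) ℂ))
            rwa [sub_smul, one_smul, sub_nonneg] at h
    · rw [pivotPOVM, Function.update_of_ne hij]
      exact (smul_nonneg hc (hP₀ i)).posSemidef
  · rw [← Finset.add_sum_erase _ _ (Finset.mem_univ j), pivotPOVM, Function.update_self,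
      Finset.sum_congr rfl fun k hk => Function.update_of_ne (Finset.ne_of_mem_erase hk) _ _]
    exact sub_add_cancel _ _

lemma successProb_pivotPOVM :
    successProb q ρ (pivotPOVM P j) = q j * (ρ j).trace.re +
      1 / ((r : ℝ) - 1) * ∑ i, ((((q i : ℂ) • ρ i - (q j : ℂ) • ρ j) * P i).trace).re := by
  set c : ℝ := 1 / ((r : ℝ) - 1)
  have hMj : pivotPOVM P j j = 1 - ∑ k ∈ Finset.univ.erase j, c • P k := Function.update_self ..
  have hMk : ∀ k ∈ Finset.univ.erase j,
      q k * (ρ k * pivotPOVM P j k).trace.re = c * (q k * (ρ k * P k).trace.re) := fun k hk => by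
    rw [pivotPOVM, Function.update_of_ne (Finset.ne_of_mem_erase hk), Matrix.mul_smul,
      trace_smul, Complex.smul_re]
    ring
  rw [successProb, ← Finset.add_sum_erase _ _ (Finset.mem_univ j), Finset.sum_congr rfl hMk, hMj,
    ← Finset.add_sum_erase _ _ (Finset.mem_univ j), sub_self, Matrix.zero_mul, trace_zero,
    Complex.zero_re, zero_add]
  simp only [Matrix.mul_one, Finset.mul_sum, Matrix.mul_smul, Matrix.sub_mul,
    Matrix.smul_mul, trace_sub, trace_sum, trace_smul, Complex.sub_re, Complex.re_sum,
    Complex.smul_re, smul_eq_mul, Complex.re_ofReal_mul, Finset.sum_sub_distrib, mul_sub]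
  ring_nf

end Discrimination

theorem stmt5 {n r : ℕ} (hr : 2 ≤ r) (ρ : Fin r → Matrix (Fin n) (Fin n) ℂ)
    (q : Fin r → ℝ) (hρ : ∀ i, IsDensity (ρ i)) (hq : ∀ i, 0 < q i)
    (hq1 : ∑ i, q i = 1) :
    optSuccess q ρ ≥
      Finset.univ.sup' (Finset.univ_nonempty_iff.mpr ⟨⟨0, by omega⟩⟩)
        (fun j => q j + (1 / ((r : ℝ) - 1)) *
          ∑ i, traceNorm (matPosPart ((q i : ℂ) • ρ i - (q j : ℂ) • ρ j))) := by
  refine Finset.sup'_le _ _ fun j _ => ?_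
  set X : Fin r → Matrix (Fin n) (Fin n) ℂ := fun i => (q i : ℂ) • ρ i - (q j : ℂ) • ρ j
  have hX : ∀ i, (X i).IsHermitian := fun i =>
    ((hρ i).1.1.smul (Complex.conj_ofReal (q i))).sub ((hρ j).1.1.smul (Complex.conj_ofReal (q j)))
  have hnorm : ∀ i, traceNorm (matPosPart (X i)) = (X i * posProj (X i)).trace.re := fun i => by
    rw [matPosPart_eq_posPart (hX i), traceNorm_of_nonneg (CFC.posPart_nonneg _),
      mul_posProj (hX i)]
  calc _ = successProb q ρ (pivotPOVM (fun i => posProj (X i)) j) := by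
        rw [successProb_pivotPOVM, (hρ j).2, Complex.one_re, mul_one,
          Finset.sum_congr rfl fun i _ => hnorm i]
    _ ≤ optSuccess q ρ :=
        successProb_le_optSuccess hρ (fun i => (hq i).le) hq1
          (isPOVM_pivotPOVM (fun i => posProj_nonneg _) (fun i => posProj_le_one _))
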